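/- arXiv:1407.1533 — 5 statements merged into one kernel-verified Lean document; each statement's English description precedes it below -/
import Mathlib

section
/- In Wythoff's game, every positive integer appears in exactly one P-position of the form (n, σ(n)) with n ≥ 0 (viewing P-positions as unordered pairs). Moreover, for a positive integer m with Zeckendorf representation m = F_{i_1} + ... + F_{i_j} (i_1 < i_2 < ... < i_j), m is the smaller element of the unordered P-position containing it if and only if the index i_1 of the smallest Fibonacci number in its Zeckendorf representation is even. -/
/-- A move in a CM-Nim game with permissible family `𝒮`: choose a permissible
(nonempty) set `S` of jars and a positive number `c` of cookies with `c ≤ p i`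
for every `i ∈ S`, and take `c` cookies from each jar in `S`. -/
def CMMove {k : ℕ} (𝒮 : Set (Finset (Fin k))) (p q : Fin k → ℕ) : Prop :=
  ∃ S ∈ 𝒮, S.Nonempty ∧ ∃ c > 0, (∀ i ∈ S, c ≤ p i ∧ q i = p i - c) ∧ ∀ i ∉ S, q i = p i

lemma CMMove.sum_lt {k : ℕ} {𝒮 : Set (Finset (Fin k))} {p q : Fin k → ℕ}
    (h : CMMove 𝒮 p q) : ∑ i, q i < ∑ i, p i := by
  obtain ⟨S, hS, ⟨i0, hi0⟩, c, hc, h1, h2⟩ := h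
  apply Finset.sum_lt_sum
  · intro i _
    by_cases hi : i ∈ S
    · have := h1 i hi; omega
    · rw [h2 i hi]
  · exact ⟨i0, Finset.mem_univ _, by have := h1 i0 hi0; omega⟩

/-- P-positions of a CM-Nim game, defined by well-founded recursion on the
total number of cookies: a position is a P-position iff every move from it
leads to a position that is not a P-position. -/
def CMPPos {k : ℕ} (𝒮 : Set (Finset (Fin k))) (p : Fin k → ℕ) : Prop :=
  ∀ q, CMMove 𝒮 p q → ¬ CMPPos 𝒮 q
termination_by ∑ i, p i
decreasing_by exact CMMove.sum_lt (by assumption)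

/-- Nim with `k` piles: only singletons are permissible. -/
def NimSets (k : ℕ) : Set (Finset (Fin k)) := {S | ∃ i, S = {i}}

/-- Wythoff's game: the permissible sets are `{1}`, `{2}` and `{1,2}`. -/
def WythoffSets : Set (Finset (Fin 2)) := {{0}, {1}, {0, 1}}

/-- The index of the largest Fibonacci number not exceeding `n`
(for `n ≥ 1` this index is at least `2`, matching the convention that the
Fibonacci number `1` is used with index `2`). -/
def greatestFibIdx (n : ℕ) : ℕ := Nat.findGreatest (fun i => Nat.fib i ≤ n) (n + 2)

lemma greatestFibIdx_le (n : ℕ) (hn : 0 < n) : Nat.fib (greatestFibIdx n) ≤ n :=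
  Nat.findGreatest_spec (P := fun i => Nat.fib i ≤ n) (m := 2) (by omega) (by show Nat.fib 2 ≤ n; rw [Nat.fib_two]; omega)

lemma two_le_greatestFibIdx (n : ℕ) (hn : 0 < n) : 2 ≤ greatestFibIdx n :=
  Nat.le_findGreatest (P := fun i => Nat.fib i ≤ n) (by omega) (by show Nat.fib 2 ≤ n; rw [Nat.fib_two]; omega)

/-- The Fibonacci successor `σ(n)`: replace each Fibonacci number in the
Zeckendorf representation of `n` (computed greedily: subtract the largest
Fibonacci number not greater than `n`, and repeat) with the next Fibonacci
number; `σ(0) = 0`. -/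
def fibSucc (n : ℕ) : ℕ :=
  if hn : n = 0 then 0
  else Nat.fib (greatestFibIdx n + 1) + fibSucc (n - Nat.fib (greatestFibIdx n))
termination_by n
decreasing_by
  have h1 := greatestFibIdx_le n (by omega)
  have h2 := two_le_greatestFibIdx n (by omega)
  have h3 : 0 < Nat.fib (greatestFibIdx n) := Nat.fib_pos.mpr (by omega)
  omega

/-- `I` is the index set of a Zeckendorf representation: all indices are at
least `2` and no two indices are consecutive. -/
def IsZeckendorf (I : Finset ℕ) : Prop := (∀ i ∈ I, 2 ≤ i) ∧ ∀ i ∈ I, i + 1 ∉ I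

/-!
Write `n = ∑ i ∈ Z, F i` in Zeckendorf form. By Binet's formula `σ n - φ n = ∑ i ∈ Z, ψ ^ i`,
a sum dominated by the term of the smallest index `i₁`; so when `i₁` is even,
`0 < σ n - φ n < φ⁻¹`, which says exactly that `n = ⌊k φ⌋` and `σ n = ⌊k φ²⌋` for the gap
`k = σ n - n`. Call such `n` lower. Shifting Zeckendorf indices by one shows that `σ` maps the
lower numbers bijectively onto the positive numbers with odd `i₁`, and Rayleigh's theorem for
the Beatty sequences of `φ` and `φ²` shows that every gap `k ≥ 1` occurs. These are the classical
properties of Wythoff's pairs, which make `(0, 0)`, the pairs `(n, σ n)` with `n` lower and their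
mirror images a kernel of the move graph of Wythoff's game (no move stays inside it, and every
position outside it has a move into it), i.e. its set of P-positions.
-/

theorem cmpPos_iff_of_kernel {k : ℕ} {𝒮 : Set (Finset (Fin k))} {P : (Fin k → ℕ) → Prop}
    (indep : ∀ p q, P p → CMMove 𝒮 p q → ¬ P q)
    (absorb : ∀ p, ¬ P p → ∃ q, CMMove 𝒮 p q ∧ P q) (p : Fin k → ℕ) :
    CMPPos 𝒮 p ↔ P p := by
  induction hs : ∑ i, p i using Nat.strong_induction_on generalizing p with
  | _ s ih =>
    have ih' : ∀ q, CMMove 𝒮 p q → (CMPPos 𝒮 q ↔ P q) := fun q hq =>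
      ih _ (hs ▸ hq.sum_lt) q rfl
    rw [CMPPos]
    refine ⟨fun hp => by_contra fun hP => ?_, fun hP q hq hq' => indep p q hP hq ((ih' q hq).1 hq')⟩
    obtain ⟨q, hq, hPq⟩ := absorb p hP
    exact hp q hq ((ih' q hq).2 hPq)

lemma wythoffMove_iff {x y u v : ℕ} :
    CMMove WythoffSets ![x, y] ![u, v] ↔
      (u < x ∧ v = y) ∨ (u = x ∧ v < y) ∨ (u < x ∧ v < y ∧ x - u = y - v) := by
  constructor
  · rintro ⟨S, hS, -, c, hc, hin, hout⟩
    rcases hS with rfl | rfl | rfl <;> simp [Fin.forall_fin_two] at hin hout <;> omega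
  · rintro (⟨hu, rfl⟩ | ⟨rfl, hv⟩ | ⟨hu, hv, h⟩)
    · exact ⟨{0}, by simp [WythoffSets], by simp, x - u, by omega, by simp; omega, by simp⟩
    · exact ⟨{1}, by simp [WythoffSets], by simp, y - v, by omega, by simp; omega, by simp⟩
    · exact ⟨{0, 1}, by simp [WythoffSets], by simp, x - u, by omega,
        by simp; omega, by simp⟩

structure IsWythoffPairing (L : Set ℕ) (f : ℕ → ℕ) : Prop where
  pos : ∀ a ∈ L, 0 < a
  lt_apply : ∀ a ∈ L, a < f a
  apply_notMem : ∀ a ∈ L, f a ∉ L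
  exists_apply_eq : ∀ n, 0 < n → n ∉ L → ∃ a ∈ L, f a = n
  strictMonoOn_sub : StrictMonoOn (fun a => f a - a) L
  exists_sub_eq : ∀ d, 0 < d → ∃ a ∈ L, f a - a = d

def PairingPos (L : Set ℕ) (f : ℕ → ℕ) (x y : ℕ) : Prop :=
  (x = 0 ∧ y = 0) ∨ ∃ a ∈ L, (x = a ∧ y = f a) ∨ (x = f a ∧ y = a)

lemma PairingPos.symm {L : Set ℕ} {f : ℕ → ℕ} {x y : ℕ} (h : PairingPos L f x y) :
    PairingPos L f y x := by
  unfold PairingPos at *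
  aesop

namespace IsWythoffPairing

variable {L : Set ℕ} {f : ℕ → ℕ}

lemma strictMonoOn (hLf : IsWythoffPairing L f) : StrictMonoOn f L := fun a ha b hb hab => by
  have : f a - a < f b - b := hLf.strictMonoOn_sub ha hb hab
  have := hLf.lt_apply a ha
  have := hLf.lt_apply b hb
  omega

lemma existsUnique (hLf : IsWythoffPairing L f) {m : ℕ} (hm : 0 < m) :
    ∃! a, a ∈ L ∧ (m = a ∨ m = f a) := by
  obtain ⟨a, ha, hma⟩ : ∃ a ∈ L, m = a ∨ m = f a := by
    by_cases hmL : m ∈ L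
    · exact ⟨m, hmL, Or.inl rfl⟩
    · obtain ⟨a, ha, rfl⟩ := hLf.exists_apply_eq m hm hmL
      exact ⟨a, ha, Or.inr rfl⟩
  refine ⟨a, ⟨ha, hma⟩, fun b ⟨hb, hmb⟩ => ?_⟩
  rcases hma with rfl | rfl <;> rcases hmb with rfl | hfb
  · rfl
  · exact absurd (hfb ▸ ha) (hLf.apply_notMem b hb)
  · exact absurd hb (hLf.apply_notMem a ha)
  · exact hLf.strictMonoOn.injOn hb ha hfb.symm

lemma eq_iff_mem (hLf : IsWythoffPairing L f) {a m : ℕ} (ha : a ∈ L) (hm : m = a ∨ m = f a) :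
    m = a ↔ m ∈ L := by
  refine ⟨fun h => h ▸ ha, fun hmL => hm.resolve_right ?_⟩
  rintro rfl
  exact hLf.apply_notMem a ha hmL

lemma pairingPos_indep (hLf : IsWythoffPairing L f) {x y u v : ℕ} (hxy : PairingPos L f x y)
    (hmove : CMMove WythoffSets ![x, y] ![u, v]) : ¬ PairingPos L f u v := by
  rw [wythoffMove_iff] at hmove
  rintro (⟨rfl, rfl⟩ | ⟨b, hb, hbuv⟩) <;> rcases hxy with ⟨rfl, rfl⟩ | ⟨a, ha, haxy⟩
  · omega
  · have := hLf.pos a ha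
    have := hLf.lt_apply a ha
    omega
  · omega
  · have hab := hLf.apply_notMem a ha
    have hba := hLf.apply_notMem b hb
    have := hLf.lt_apply a ha
    have := hLf.lt_apply b hb
    have : a ≠ f b := fun h => hba (h ▸ ha)
    have : b ≠ f a := fun h => hab (h ▸ hb)
    rcases lt_trichotomy a b with h | rfl | h
    · have : f a - a < f b - b := hLf.strictMonoOn_sub ha hb h
      have := hLf.strictMonoOn ha hb h
      omega
    · omega
    · have : f b - b < f a - a := hLf.strictMonoOn_sub hb ha h
      have := hLf.strictMonoOn hb ha h
      omega

lemma exists_move_to_pairingPos_of_le (hLf : IsWythoffPairing L f) {x y : ℕ} (hxy : x ≤ y)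
    (h : ¬ PairingPos L f x y) :
    ∃ u v, CMMove WythoffSets ![x, y] ![u, v] ∧ PairingPos L f u v := by
  simp only [wythoffMove_iff]
  rcases Nat.eq_zero_or_pos x with rfl | hx
  · exact ⟨0, 0, by unfold PairingPos at h; omega, Or.inl ⟨rfl, rfl⟩⟩
  rcases hxy.eq_or_lt with rfl | hxy
  · exact ⟨0, 0, by omega, Or.inl ⟨rfl, rfl⟩⟩
  obtain ⟨l, hl, hgap⟩ := hLf.exists_sub_eq (y - x) (by omega)
  have := hLf.lt_apply l hl
  rcases lt_trichotomy x l with hxl | rfl | hxl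
  · by_cases hxL : x ∈ L
    · have : f x - x < f l - l := hLf.strictMonoOn_sub hxL hl hxl
      have := hLf.lt_apply x hxL
      exact ⟨x, f x, by omega, Or.inr ⟨x, hxL, Or.inl ⟨rfl, rfl⟩⟩⟩
    · obtain ⟨u, hu, rfl⟩ := hLf.exists_apply_eq x hx hxL
      have := hLf.lt_apply u hu
      exact ⟨f u, u, by omega, Or.inr ⟨u, hu, Or.inr ⟨rfl, rfl⟩⟩⟩
  · exact absurd (Or.inr ⟨x, hl, Or.inl ⟨rfl, by omega⟩⟩) h
  · exact ⟨l, f l, by omega, Or.inr ⟨l, hl, Or.inl ⟨rfl, rfl⟩⟩⟩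

lemma exists_move_to_pairingPos (hLf : IsWythoffPairing L f) {x y : ℕ}
    (h : ¬ PairingPos L f x y) :
    ∃ u v, CMMove WythoffSets ![x, y] ![u, v] ∧ PairingPos L f u v := by
  rcases le_total x y with hle | hle
  · exact hLf.exists_move_to_pairingPos_of_le hle h
  · obtain ⟨u, v, hmove, huv⟩ := hLf.exists_move_to_pairingPos_of_le hle (fun h' => h h'.symm)
    refine ⟨v, u, ?_, huv.symm⟩
    rw [wythoffMove_iff] at hmove ⊢
    omega

lemma cmpPos_iff (hLf : IsWythoffPairing L f) (x y : ℕ) :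
    CMPPos WythoffSets ![x, y] ↔ PairingPos L f x y := by
  refine cmpPos_iff_of_kernel (P := fun p => PairingPos L f (p 0) (p 1))
    (fun p q hp hq => ?_) (fun p hp => ?_) ![x, y]
  · rw [← FinVec.etaExpand_eq p, ← FinVec.etaExpand_eq q] at hq
    exact hLf.pairingPos_indep hp hq
  · obtain ⟨u, v, hmove, huv⟩ := hLf.exists_move_to_pairingPos hp
    exact ⟨![u, v], by rwa [← FinVec.etaExpand_eq p], huv⟩

end IsWythoffPairing

lemma List.isZeckendorfRep_iff {l : List ℕ} :
    l.IsZeckendorfRep ↔ l.Pairwise (fun a b => b + 2 ≤ a) ∧ ∀ a ∈ l, 2 ≤ a := by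
  have : Trans (fun a b : ℕ => b + 2 ≤ a) (fun a b => b + 2 ≤ a) (fun a b => b + 2 ≤ a) :=
    ⟨fun hab hbc => by omega⟩
  rw [List.IsZeckendorfRep, List.isChain_iff_pairwise, List.pairwise_append]
  simp

lemma List.IsZeckendorfRep.map_add_one {l : List ℕ} (hl : l.IsZeckendorfRep) :
    (l.map (· + 1)).IsZeckendorfRep := by
  rw [List.isZeckendorfRep_iff] at hl ⊢
  refine ⟨List.pairwise_map.2 (hl.1.imp fun h => by omega), ?_⟩
  simp only [List.mem_map]
  rintro _ ⟨a, ha, rfl⟩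
  have := hl.2 a ha
  omega

lemma List.IsZeckendorfRep.map_sub_one {l : List ℕ} (hl : l.IsZeckendorfRep)
    (h3 : ∀ a ∈ l, 3 ≤ a) : (l.map (· - 1)).IsZeckendorfRep := by
  rw [List.isZeckendorfRep_iff] at hl ⊢
  refine ⟨List.pairwise_map.2 (hl.1.imp_of_mem fun _ hb h => by have := h3 _ hb; omega), ?_⟩
  simp only [List.mem_map]
  rintro _ ⟨a, ha, rfl⟩
  have := h3 a ha
  omega

lemma greatestFibIdx_eq_greatestFib (n : ℕ) : greatestFibIdx n = Nat.greatestFib n := by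
  have h : ¬ Nat.fib (n + 2) ≤ n := by
    have := Nat.le_fib_add_one (n + 2)
    omega
  rw [greatestFibIdx, Nat.greatestFib, Nat.findGreatest_succ, if_neg h]

lemma fibSucc_eq_sum (n : ℕ) :
    fibSucc n = ((Nat.zeckendorf n).map fun i => Nat.fib (i + 1)).sum := by
  induction n using Nat.strong_induction_on with
  | _ n ih =>
    rcases Nat.eq_zero_or_pos n with rfl | hn
    · simp [fibSucc]
    have := Nat.fib_pos.mpr (Nat.greatestFib_pos.mpr hn)
    have := Nat.fib_greatestFib_le n
    rw [fibSucc, dif_neg hn.ne', Nat.zeckendorf_of_pos hn, List.map_cons, List.sum_cons,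
      greatestFibIdx_eq_greatestFib, ih _ (by omega)]

lemma fibSucc_zero : fibSucc 0 = 0 := by simp [fibSucc_eq_sum]

lemma le_fibSucc (n : ℕ) : n ≤ fibSucc n := by
  conv_lhs => rw [← Nat.sum_zeckendorf_fib n]
  rw [fibSucc_eq_sum]
  exact List.sum_le_sum fun i _ => Nat.fib_mono i.le_succ

lemma fibSucc_sum_fib {l : List ℕ} (hl : l.IsZeckendorfRep) :
    fibSucc (l.map Nat.fib).sum = (l.map fun i => Nat.fib (i + 1)).sum := by
  rw [fibSucc_eq_sum, Nat.zeckendorf_sum_fib hl]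

lemma zeckendorf_fibSucc (n : ℕ) :
    Nat.zeckendorf (fibSucc n) = (Nat.zeckendorf n).map (· + 1) := by
  rw [fibSucc_eq_sum, ← Nat.zeckendorf_sum_fib (Nat.isZeckendorfRep_zeckendorf n).map_add_one,
    List.map_map]
  rfl

/-- `Nat.zeckendorf` lists the indices in decreasing order, so the smallest index is the last
one. The value `minZeckIdx 0 = 0` is junk. -/
def minZeckIdx (n : ℕ) : ℕ := (Nat.zeckendorf n).getLast?.getD 0

lemma minZeckIdx_mem {n : ℕ} (hn : 0 < n) : minZeckIdx n ∈ Nat.zeckendorf n := by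
  have hne : Nat.zeckendorf n ≠ [] := by simp [Nat.zeckendorf_of_pos hn]
  rw [minZeckIdx, List.getLast?_eq_some_getLast hne]
  exact List.getLast_mem hne

lemma minZeckIdx_le {n i : ℕ} (hi : i ∈ Nat.zeckendorf n) : minZeckIdx n ≤ i := by
  have hpw := (List.isZeckendorfRep_iff.1 (Nat.isZeckendorfRep_zeckendorf n)).1
  rw [minZeckIdx, List.getLast?_eq_some_getLast (List.ne_nil_of_mem hi)]
  exact (hpw.imp (R := fun a b => b + 2 ≤ a) (S := (· ≥ ·)) (by omega)).rel_getLast hi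

lemma two_le_minZeckIdx {n : ℕ} (hn : 0 < n) : 2 ≤ minZeckIdx n :=
  (List.isZeckendorfRep_iff.1 (Nat.isZeckendorfRep_zeckendorf n)).2 _ (minZeckIdx_mem hn)

lemma minZeckIdx_sum_fib {I : Finset ℕ} (hI : IsZeckendorf I) {i : ℕ} (hi : i ∈ I)
    (hmin : ∀ j ∈ I, i ≤ j) : minZeckIdx (∑ j ∈ I, Nat.fib j) = i := by
  set l := I.sort (· ≥ ·)
  have hl : l.IsZeckendorfRep := by
    refine List.isZeckendorfRep_iff.2 ⟨?_, fun a ha => hI.1 a ((Finset.mem_sort _).1 ha)⟩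
    refine (Finset.sortedGT_sort I).pairwise.imp_of_mem fun {a b} ha hb hab => ?_
    have : a ≠ b + 1 := fun h => hI.2 b ((Finset.mem_sort _).1 hb) (h ▸ (Finset.mem_sort _).1 ha)
    omega
  have hsum : ∑ j ∈ I, Nat.fib j = (l.map Nat.fib).sum := by
    rw [← List.sum_toFinset _ (Finset.sort_nodup _ _), Finset.sort_toFinset]
  have hmem : ∀ j, j ∈ Nat.zeckendorf (∑ j ∈ I, Nat.fib j) ↔ j ∈ I := fun j => by
    rw [hsum, Nat.zeckendorf_sum_fib hl, Finset.mem_sort]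
  have hpos : 0 < ∑ j ∈ I, Nat.fib j := Finset.sum_pos' (fun _ _ => Nat.zero_le _)
    ⟨i, hi, Nat.fib_pos.2 (by have := hI.1 i hi; omega)⟩
  exact le_antisymm (minZeckIdx_le ((hmem i).2 hi)) (hmin _ ((hmem _).1 (minZeckIdx_mem hpos)))

lemma minZeckIdx_fibSucc {n : ℕ} (hn : 0 < n) : minZeckIdx (fibSucc n) = minZeckIdx n + 1 := by
  have hne : Nat.zeckendorf n ≠ [] := by simp [Nat.zeckendorf_of_pos hn]
  rw [minZeckIdx, minZeckIdx, zeckendorf_fibSucc, List.getLast?_map,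
    List.getLast?_eq_some_getLast hne]
  rfl

lemma exists_fibSucc_eq_of_odd {u : ℕ} (hu : 0 < u) (hodd : Odd (minZeckIdx u)) :
    ∃ a, 0 < a ∧ Even (minZeckIdx a) ∧ fibSucc a = u := by
  have h3 : ∀ i ∈ Nat.zeckendorf u, 3 ≤ i := fun i hi => by
    have := two_le_minZeckIdx hu
    have := minZeckIdx_le hi
    obtain ⟨k, hk⟩ := hodd
    omega
  have hrep := (Nat.isZeckendorfRep_zeckendorf u).map_sub_one h3
  set a := (((Nat.zeckendorf u).map (· - 1)).map Nat.fib).sum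
  have hσ : fibSucc a = u := by
    conv_rhs => rw [← Nat.sum_zeckendorf_fib u]
    rw [fibSucc_sum_fib hrep, List.map_map]
    congr 1
    refine List.map_congr_left fun i hi => ?_
    have := h3 i hi
    simp only [Function.comp_apply]
    congr 1
    omega
  have ha : 0 < a := Nat.pos_of_ne_zero fun h => by
    rw [h, fibSucc_zero] at hσ
    omega
  refine ⟨a, ha, ?_, hσ⟩
  have := minZeckIdx_fibSucc ha
  rw [hσ] at this
  simpa [this, Nat.odd_add_one] using hodd

open scoped goldenRatio

lemma inv_goldenRatio_pos : 0 < φ⁻¹ := inv_pos.2 Real.goldenRatio_pos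

lemma inv_goldenRatio_lt_one : φ⁻¹ < 1 := inv_lt_one_of_one_lt₀ Real.one_lt_goldenRatio

lemma sum_fib_succ_sub_goldenRatio_mul_sum_fib (l : List ℕ) :
    ((l.map fun i => Nat.fib (i + 1)).sum : ℝ) - φ * (l.map Nat.fib).sum =
      (l.map (ψ ^ ·)).sum := by
  induction l with
  | nil => simp
  | cons a t ih =>
    simp only [List.map_cons, List.sum_cons, Nat.cast_add]
    rw [← Real.fib_succ_sub_goldenRatio_mul_fib, ← ih]
    ring

lemma fibSucc_sub_goldenRatio_mul (n : ℕ) :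
    (fibSucc n : ℝ) - φ * n = ((Nat.zeckendorf n).map (ψ ^ ·)).sum := by
  nth_rw 2 [← Nat.sum_zeckendorf_fib n]
  rw [fibSucc_eq_sum, sum_fib_succ_sub_goldenRatio_mul_sum_fib]

lemma inv_goldenRatio_pow_add_pow (j : ℕ) : φ⁻¹ ^ (j + 1) + φ⁻¹ ^ (j + 2) = φ⁻¹ ^ j := by
  rw [Real.inv_goldenRatio]
  linear_combination (-ψ) ^ j * Real.goldenConj_sq

lemma abs_goldenConj_pow (i : ℕ) : |ψ ^ i| = φ⁻¹ ^ i := by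
  rw [abs_pow, Real.inv_goldenRatio, abs_of_neg Real.goldenConj_neg]

/-- The bound telescopes so that the induction can peel off the largest index. -/
lemma abs_sum_goldenConj_pow_sub_le : ∀ (a : ℕ) (t : List ℕ), (a :: t).IsZeckendorfRep →
    |((a :: t).map (ψ ^ ·)).sum - ψ ^ (a :: t).getLast (List.cons_ne_nil a t)| ≤
      φ⁻¹ ^ ((a :: t).getLast (List.cons_ne_nil a t) + 1) - φ⁻¹ ^ (a + 1)
  | a, [], _ => by simp
  | a, b :: t, h => by
    obtain ⟨hpw, h2⟩ := List.isZeckendorfRep_iff.1 h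
    have hab : b + 2 ≤ a := List.rel_of_pairwise_cons hpw List.mem_cons_self
    have ih := abs_sum_goldenConj_pow_sub_le b t
      (List.isZeckendorfRep_iff.2 ⟨hpw.of_cons, fun x hx => h2 x (List.mem_cons_of_mem a hx)⟩)
    have hdecay : φ⁻¹ ^ a + φ⁻¹ ^ (a + 1) ≤ φ⁻¹ ^ (b + 1) := by
      obtain ⟨j, rfl⟩ : ∃ j, a = j + 1 := ⟨a - 1, by omega⟩
      rw [inv_goldenRatio_pow_add_pow]
      exact pow_le_pow_of_le_one inv_goldenRatio_pos.le inv_goldenRatio_lt_one.le (by omega)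
    rw [List.getLast_cons_cons, List.map_cons, List.sum_cons, add_sub_assoc]
    have := abs_add_le (ψ ^ a)
      (((b :: t).map (ψ ^ ·)).sum - ψ ^ (b :: t).getLast (List.cons_ne_nil b t))
    rw [abs_goldenConj_pow] at this
    linarith

lemma fibSucc_sub_goldenRatio_mul_bounds {n : ℕ} (hn : 0 < n) (he : Even (minZeckIdx n)) :
    0 < (fibSucc n : ℝ) - φ * n ∧ (fibSucc n : ℝ) - φ * n < φ⁻¹ := by
  obtain ⟨a, t, hz⟩ := List.exists_cons_of_ne_nil (l := Nat.zeckendorf n)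
    (by simp [Nat.zeckendorf_of_pos hn])
  have hk : minZeckIdx n = (a :: t).getLast (List.cons_ne_nil a t) := by
    rw [minZeckIdx, hz, List.getLast?_eq_some_getLast]
    rfl
  have hb := abs_sum_goldenConj_pow_sub_le a t (hz ▸ Nat.isZeckendorfRep_zeckendorf n)
  rw [← hk, ← hz, ← fibSucc_sub_goldenRatio_mul, abs_le] at hb
  have hψ : ψ ^ minZeckIdx n = φ⁻¹ ^ minZeckIdx n := by
    rw [Real.inv_goldenRatio, he.neg_pow]
  obtain ⟨j, hj⟩ : ∃ j, minZeckIdx n = j + 2 :=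
    ⟨minZeckIdx n - 2, by have := two_le_minZeckIdx hn; omega⟩
  rw [hψ, hj] at hb
  have hsum : φ⁻¹ ^ (j + 2) + φ⁻¹ ^ (j + 2 + 1) = φ⁻¹ ^ (j + 1) :=
    inv_goldenRatio_pow_add_pow (j + 1)
  have hdec : φ⁻¹ ^ (j + 2 + 1) < φ⁻¹ ^ (j + 2) :=
    pow_lt_pow_right_of_lt_one₀ inv_goldenRatio_pos inv_goldenRatio_lt_one (by omega)
  have hle : φ⁻¹ ^ (j + 1) ≤ φ⁻¹ ^ 1 :=
    pow_le_pow_of_le_one inv_goldenRatio_pos.le inv_goldenRatio_lt_one.le (by omega)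
  have : 0 < φ⁻¹ ^ (a + 1) := pow_pos inv_goldenRatio_pos _
  rw [pow_one] at hle
  constructor <;> linarith

lemma fibSucc_sub_mul_goldenRatio (n : ℕ) :
    ((fibSucc n - n : ℕ) : ℝ) * φ = n + φ * ((fibSucc n : ℝ) - φ * n) := by
  rw [Nat.cast_sub (le_fibSucc n)]
  linear_combination (n : ℝ) * Real.goldenRatio_sq

lemma floor_fibSucc_sub_mul_goldenRatio {n : ℕ} (hn : 0 < n) (he : Even (minZeckIdx n)) :
    ⌊((fibSucc n - n : ℕ) : ℝ) * φ⌋₊ = n := by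
  obtain ⟨h0, h1⟩ := fibSucc_sub_goldenRatio_mul_bounds hn he
  have hlt : φ * ((fibSucc n : ℝ) - φ * n) < 1 := by
    calc φ * ((fibSucc n : ℝ) - φ * n) < φ * φ⁻¹ := by gcongr
      _ = 1 := mul_inv_cancel₀ Real.goldenRatio_ne_zero
  rw [Nat.floor_eq_iff (by positivity), fibSucc_sub_mul_goldenRatio]
  constructor <;> nlinarith [Real.goldenRatio_pos]

lemma floor_fibSucc_sub_mul_goldenRatio_sq {n : ℕ} (hn : 0 < n) (he : Even (minZeckIdx n)) :
    ⌊((fibSucc n - n : ℕ) : ℝ) * φ ^ 2⌋₊ = fibSucc n := by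
  rw [Real.goldenRatio_sq, mul_add, mul_one, Nat.floor_add_natCast (by positivity),
    floor_fibSucc_sub_mul_goldenRatio hn he]
  have := le_fibSucc n
  omega

lemma strictMono_floor_mul_goldenRatio : StrictMono fun k : ℕ => ⌊(k : ℝ) * φ⌋₊ := by
  refine strictMono_nat_of_lt_succ fun k => ?_
  calc ⌊(k : ℝ) * φ⌋₊ < ⌊(k : ℝ) * φ⌋₊ + 1 := Nat.lt_succ_self _
    _ = ⌊(k : ℝ) * φ + 1⌋₊ := (Nat.floor_add_one (by positivity)).symm
    _ ≤ ⌊((k + 1 : ℕ) : ℝ) * φ⌋₊ := by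
      gcongr
      push_cast
      linarith [Real.one_lt_goldenRatio]

lemma floor_mul_goldenRatio_ne_floor_mul_goldenRatio_sq {k l : ℕ} (hk : 0 < k) (hl : 0 < l) :
    ⌊(k : ℝ) * φ⌋₊ ≠ ⌊(l : ℝ) * φ ^ 2⌋₊ := by
  intro h
  have hrs : Real.HolderConjugate φ (φ ^ 2) := by
    refine Real.holderConjugate_iff.2 ⟨Real.one_lt_goldenRatio, ?_⟩
    rw [← inv_pow, Real.inv_goldenRatio, neg_sq, Real.goldenConj_sq]
    ring
  have hpart := Irrational.beattySeq_symmDiff_beattySeq_pos hrs Real.goldenRatio_irrational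
  have hN : (⌊(k : ℝ) * φ⌋₊ : ℤ) ∈ {n : ℤ | 0 < n} := by
    have : (1 : ℝ) ≤ k * φ := one_le_mul_of_one_le_of_one_le (by exact_mod_cast hk)
      Real.one_lt_goldenRatio.le
    exact Int.natCast_pos.2 (Nat.floor_pos.2 this)
  rw [← hpart, Set.mem_symmDiff] at hN
  have h1 : (⌊(k : ℝ) * φ⌋₊ : ℤ) ∈ {beattySeq φ j | j > 0} :=
    ⟨k, by exact_mod_cast hk, by
      simp only [beattySeq, Int.cast_natCast]
      exact (Int.natCast_floor_eq_floor (by positivity)).symm⟩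
  have h2 : (⌊(k : ℝ) * φ⌋₊ : ℤ) ∈ {beattySeq (φ ^ 2) j | j > 0} :=
    ⟨l, by exact_mod_cast hl, by
      rw [h]
      simp only [beattySeq, Int.cast_natCast]
      exact (Int.natCast_floor_eq_floor (by positivity)).symm⟩
  tauto

def lowerWythoff : Set ℕ := {n | 0 < n ∧ Even (minZeckIdx n)}

lemma lt_fibSucc_of_mem_lowerWythoff {n : ℕ} (hn : n ∈ lowerWythoff) : n < fibSucc n := by
  have := (fibSucc_sub_goldenRatio_mul_bounds hn.1 hn.2).1
  have : (n : ℝ) ≤ φ * n := le_mul_of_one_le_left (by positivity) Real.one_lt_goldenRatio.le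
  exact_mod_cast (by linarith : (n : ℝ) < fibSucc n)

theorem isWythoffPairing_lowerWythoff : IsWythoffPairing lowerWythoff fibSucc where
  pos _ ha := ha.1
  lt_apply _ ha := lt_fibSucc_of_mem_lowerWythoff ha
  apply_notMem a ha h := by
    have he : Even (minZeckIdx (fibSucc a)) := h.2
    rw [minZeckIdx_fibSucc ha.1, Nat.even_add_one] at he
    exact he ha.2
  exists_apply_eq n hn hnL := by
    obtain ⟨a, ha, he, rfl⟩ := exists_fibSucc_eq_of_odd hn (by simpa [lowerWythoff, hn] using hnL)
    exact ⟨a, ⟨ha, he⟩, rfl⟩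
  strictMonoOn_sub a ha b hb hab := by
    rw [← strictMono_floor_mul_goldenRatio.lt_iff_lt]
    beta_reduce
    rwa [floor_fibSucc_sub_mul_goldenRatio ha.1 ha.2, floor_fibSucc_sub_mul_goldenRatio hb.1 hb.2]
  exists_sub_eq d hd := by
    have hn : 0 < ⌊(d : ℝ) * φ⌋₊ := Nat.floor_pos.2
      (one_le_mul_of_one_le_of_one_le (by exact_mod_cast hd) Real.one_lt_goldenRatio.le)
    rcases Nat.even_or_odd (minZeckIdx ⌊(d : ℝ) * φ⌋₊) with he | ho
    · refine ⟨_, ⟨hn, he⟩, strictMono_floor_mul_goldenRatio.injective ?_⟩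
      exact floor_fibSucc_sub_mul_goldenRatio hn he
    · obtain ⟨b, hb, hbe, hσ⟩ := exists_fibSucc_eq_of_odd hn ho
      have hgap : 0 < fibSucc b - b := Nat.sub_pos_of_lt (lt_fibSucc_of_mem_lowerWythoff ⟨hb, hbe⟩)
      exact absurd (by rw [floor_fibSucc_sub_mul_goldenRatio_sq hb hbe, hσ])
        (floor_mul_goldenRatio_ne_floor_mul_goldenRatio_sq hd hgap)

lemma cmpPos_fibSucc_iff (n : ℕ) :
    CMPPos WythoffSets ![n, fibSucc n] ↔ n = 0 ∨ n ∈ lowerWythoff := by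
  rw [isWythoffPairing_lowerWythoff.cmpPos_iff, PairingPos]
  constructor
  · rintro (⟨rfl, -⟩ | ⟨a, ha, ⟨rfl, -⟩ | ⟨rfl, h⟩⟩)
    · exact Or.inl rfl
    · exact Or.inr ha
    · have := le_fibSucc (fibSucc a)
      have := lt_fibSucc_of_mem_lowerWythoff ha
      omega
  · rintro (rfl | hn)
    · exact Or.inl ⟨rfl, fibSucc_zero⟩
    · exact Or.inr ⟨n, hn, Or.inl ⟨rfl, rfl⟩⟩

/-- Every positive integer `m` appears in exactly one P-position of Wythoff's
game of the form `(n, σ n)` (P-positions viewed as unordered pairs, recorded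
here with the smaller entry first, which is `n` since `n ≤ σ n`). Moreover,
`m` is the smaller element of that P-position if and only if the index `i₁` of
the smallest Fibonacci number in the Zeckendorf representation of `m` is even. -/
theorem wythoff_every_pos_in_unique_ppos (m : ℕ) (hm : 0 < m) :
    (∃! s : ℕ × ℕ, (∃ n : ℕ, s = (n, fibSucc n)) ∧
        CMPPos WythoffSets ![s.1, s.2] ∧ (m = s.1 ∨ m = s.2)) ∧
    (∀ s : ℕ × ℕ, (∃ n : ℕ, s = (n, fibSucc n)) →
        CMPPos WythoffSets ![s.1, s.2] → (m = s.1 ∨ m = s.2) →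
        ∀ I : Finset ℕ, IsZeckendorf I → m = ∑ i ∈ I, Nat.fib i →
          ∀ i₁ ∈ I, (∀ j ∈ I, i₁ ≤ j) → (m = s.1 ↔ Even i₁)) := by
  have hlower {n : ℕ} (hn : CMPPos WythoffSets ![n, fibSucc n]) (hmn : m = n ∨ m = fibSucc n) :
      n ∈ lowerWythoff := by
    refine ((cmpPos_fibSucc_iff n).1 hn).resolve_left ?_
    rintro rfl
    rw [fibSucc_zero] at hmn
    omega
  obtain ⟨a, ⟨ha, hma⟩, huniq⟩ := isWythoffPairing_lowerWythoff.existsUnique hm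
  refine ⟨⟨(a, fibSucc a), ⟨⟨a, rfl⟩, (cmpPos_fibSucc_iff a).2 (Or.inr ha), hma⟩, ?_⟩, ?_⟩
  · rintro _ ⟨⟨n, rfl⟩, hn, hmn⟩
    rw [huniq n ⟨hlower hn hmn, hmn⟩]
  · rintro _ ⟨n, rfl⟩ hn hmn I hI hsum i₁ hi₁ hmin
    rw [isWythoffPairing_lowerWythoff.eq_iff_mem (hlower hn hmn) hmn,
      ← minZeckIdx_sum_fib hI hi₁ hmin, ← hsum]
    exact and_iff_right hm
end

section
/- The odd CM-Nim game with k jars has exactly the same P-positions as Nim with k piles: a position (a_1, ..., a_k) is a P-position of the odd CM-Nim game if and only if it is a P-position of Nim. -/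
/-- The odd CM-Nim game with `k` jars: the permissible sets are exactly the
subsets of odd cardinality. -/
def OddSets (k : ℕ) : Set (Finset (Fin k)) := {S | Odd S.card}

/-!
A position is a P-position of Nim exactly when the nim-sum (bitwise xor) of the piles vanishes,
and the same holds for every CM-Nim game whose permissible sets all have odd size. If the nim-sum
is nonzero, the usual single-pile Nim move restores it to zero. If it is zero and `c` cookies are
taken from each jar of an odd set `S`, look at the bit `b` with `c = 2 ^ b * (odd)`: subtracting
`c` flips bit `b` of every jar in `S`, so an odd number of bits of column `b` flip and the nim-sum
becomes nonzero.
-/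

open Finset

theorem Nat.testBit_sub_two_pow_mul_odd {a b e : ℕ} (he : Odd e) (h : 2 ^ b * e ≤ a) :
    (a - 2 ^ b * e).testBit b = !a.testBit b := by
  have hpow : 0 < 2 ^ b := Nat.two_pow_pos b
  have hdiv : (a - 2 ^ b * e) / 2 ^ b = a / 2 ^ b - e := Nat.sub_mul_div _ _ _
  have hle : e ≤ a / 2 ^ b := (Nat.le_div_iff_mul_le hpow).2 (by rwa [Nat.mul_comm])
  rw [Nat.odd_iff] at he
  have hparity : (a / 2 ^ b - e) % 2 = 1 ↔ ¬ a / 2 ^ b % 2 = 1 := by omega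
  simp only [Nat.testBit_eq_decide_div_mod_eq, hdiv, hparity, decide_not]

theorem Nat.xor_lt_self_of_testBit {n x b : ℕ} (hn : n.testBit b = true)
    (hx : x.testBit b = true) (hhigh : ∀ j, b < j → x.testBit j = false) : n ^^^ x < n :=
  Nat.lt_of_testBit b (by simp [Nat.testBit_xor, hn, hx]) hn
    fun j hj => by simp [Nat.testBit_xor, hhigh j hj]

theorem Nat.testBit_fold_xor {ι : Type*} [DecidableEq ι] (s : Finset ι) (p : ι → ℕ) (b : ℕ) :
    (((s.fold (β := ℕ) (· ^^^ ·) 0 p).testBit b).toNat : ZMod 2) =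
      ∑ i ∈ s, (((p i).testBit b).toNat : ZMod 2) := by
  induction s using Finset.induction with
  | empty => simp
  | insert a s ha ih =>
    rw [fold_insert ha, Nat.testBit_xor, sum_insert ha, ← ih]
    cases (p a).testBit b <;> cases (s.fold (β := ℕ) (· ^^^ ·) 0 p).testBit b <;> decide

section NimSum

variable {ι : Type*} [Fintype ι]

def nimSum (p : ι → ℕ) : ℕ := univ.fold (β := ℕ) (· ^^^ ·) 0 p

variable [DecidableEq ι]

theorem testBit_nimSum (p : ι → ℕ) (b : ℕ) :
    (((nimSum p).testBit b).toNat : ZMod 2) = ∑ i, (((p i).testBit b).toNat : ZMod 2) :=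
  Nat.testBit_fold_xor _ _ _

theorem nimSum_eq_xor_fold_erase (p : ι → ℕ) (i : ι) :
    nimSum p = p i ^^^ (univ.erase i).fold (β := ℕ) (· ^^^ ·) 0 p :=
  calc nimSum p = (insert i (univ.erase i)).fold (β := ℕ) (· ^^^ ·) 0 p := by
        rw [insert_erase (mem_univ i)]; rfl
    _ = _ := fold_insert (notMem_erase i univ)

theorem nimSum_update (p : ι → ℕ) (i : ι) (v : ℕ) :
    nimSum (Function.update p i v) = nimSum p ^^^ p i ^^^ v := by
  have hrest : (univ.erase i).fold (β := ℕ) (· ^^^ ·) 0 (Function.update p i v) =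
      (univ.erase i).fold (β := ℕ) (· ^^^ ·) 0 p :=
    fold_congr fun j hj => Function.update_of_ne (ne_of_mem_erase hj) v p
  rw [nimSum_eq_xor_fold_erase, nimSum_eq_xor_fold_erase p i, hrest, Function.update_self,
    Nat.xor_comm (p i), Nat.xor_xor_cancel_right, Nat.xor_comm]

end NimSum

section CMNim

variable {k : ℕ}

theorem CMMove.mono {𝒮 𝒯 : Set (Finset (Fin k))} (h𝒮 : 𝒮 ⊆ 𝒯) {p q : Fin k → ℕ}
    (h : CMMove 𝒮 p q) : CMMove 𝒯 p q := by
  obtain ⟨S, hS, rest⟩ := h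
  exact ⟨S, h𝒮 hS, rest⟩

theorem cmMove_nimSets_update {p : Fin k → ℕ} {i : Fin k} {v : ℕ} (hv : v < p i) :
    CMMove (NimSets k) p (Function.update p i v) := by
  refine ⟨{i}, ⟨i, rfl⟩, singleton_nonempty i, p i - v, by omega, ?_, ?_⟩
  · intro j hj
    rw [mem_singleton.1 hj, Function.update_self]
    omega
  · intro j hj
    exact Function.update_of_ne (mt mem_singleton.2 hj) v p

theorem nimSets_subset_oddSets : NimSets k ⊆ OddSets k := by
  rintro _ ⟨i, rfl⟩
  simp [OddSets]

theorem cmPPos_iff {𝒮 : Set (Finset (Fin k))} {p : Fin k → ℕ} :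
    CMPPos 𝒮 p ↔ ∀ q, CMMove 𝒮 p q → ¬ CMPPos 𝒮 q := by
  rw [CMPPos]

theorem cmPPos_iff_of_moves {𝒮 : Set (Finset (Fin k))} (Z : (Fin k → ℕ) → Prop)
    (hP : ∀ p q, Z p → CMMove 𝒮 p q → ¬ Z q) (hN : ∀ p, ¬ Z p → ∃ q, CMMove 𝒮 p q ∧ Z q)
    (p : Fin k → ℕ) : CMPPos 𝒮 p ↔ Z p := by
  induction hn : ∑ i, p i using Nat.strong_induction_on generalizing p with
  | _ n ih =>
    have ih' : ∀ q, CMMove 𝒮 p q → (CMPPos 𝒮 q ↔ Z q) :=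
      fun q hq => ih _ (hn ▸ hq.sum_lt) q rfl
    rw [cmPPos_iff]
    constructor
    · intro h
      by_contra hZ
      obtain ⟨q, hq, hZq⟩ := hN p hZ
      exact h q hq ((ih' q hq).2 hZq)
    · intro hZ q hq
      rw [ih' q hq]
      exact hP p q hZ hq

theorem exists_nim_move_to_nimSum_eq_zero {p : Fin k → ℕ} (h : nimSum p ≠ 0) :
    ∃ q, CMMove (NimSets k) p q ∧ nimSum q = 0 := by
  obtain ⟨b, hb, hhigh⟩ := Nat.exists_most_significant_bit h
  have hcol : ∑ i, (((p i).testBit b).toNat : ZMod 2) ≠ 0 := by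
    rw [← testBit_nimSum, hb]
    decide
  obtain ⟨i, -, hi⟩ := exists_ne_zero_of_sum_ne_zero hcol
  have hib : (p i).testBit b = true := by
    cases hpib : (p i).testBit b
    · simp [hpib] at hi
    · rfl
  refine ⟨_, cmMove_nimSets_update (Nat.xor_lt_self_of_testBit hib hb hhigh), ?_⟩
  rw [nimSum_update, Nat.xor_assoc, Nat.xor_xor_cancel_left, Nat.xor_self]

theorem nimSum_ne_zero_of_oddSets_move {p q : Fin k → ℕ} (hp : nimSum p = 0)
    (h : CMMove (OddSets k) p q) : nimSum q ≠ 0 := by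
  obtain ⟨S, hS, -, c, hc, hmem, hnot⟩ := h
  obtain ⟨b, e, he, rfl⟩ := Nat.exists_eq_two_pow_mul_odd hc.ne'
  have hflip : ∀ i, (((q i).testBit b).toNat : ZMod 2) =
      ((p i).testBit b).toNat + if i ∈ S then 1 else 0 := by
    intro i
    by_cases hi : i ∈ S
    · obtain ⟨hle, hqi⟩ := hmem i hi
      rw [hqi, Nat.testBit_sub_two_pow_mul_odd he hle, if_pos hi]
      cases (p i).testBit b <;> decide
    · rw [hnot i hi, if_neg hi, add_zero]
  have hcol : (((nimSum q).testBit b).toNat : ZMod 2) = 1 := by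
    rw [testBit_nimSum, sum_congr rfl fun i _ => hflip i, sum_add_distrib, ← testBit_nimSum, hp,
      sum_boole, filter_mem_eq_inter, univ_inter, ZMod.natCast_eq_one_iff_odd.2 hS]
    simp
  intro hq
  rw [hq] at hcol
  simp at hcol

theorem cmPPos_iff_nimSum_eq_zero {𝒮 : Set (Finset (Fin k))} (hNim : NimSets k ⊆ 𝒮)
    (hOdd : 𝒮 ⊆ OddSets k) (p : Fin k → ℕ) : CMPPos 𝒮 p ↔ nimSum p = 0 :=
  cmPPos_iff_of_moves _
    (fun _ _ hp h => nimSum_ne_zero_of_oddSets_move hp (h.mono hOdd))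
    (fun _ hp => (exists_nim_move_to_nimSum_eq_zero hp).imp fun _ h => ⟨h.1.mono hNim, h.2⟩)
    p

end CMNim

/-- The odd CM-Nim game with `k` jars has exactly the same P-positions as Nim
with `k` piles. -/
theorem oddGame_ppos_iff_nim_ppos (k : ℕ) (a : Fin k → ℕ) :
    CMPPos (OddSets k) a ↔ CMPPos (NimSets k) a := by
  rw [cmPPos_iff_nimSum_eq_zero nimSets_subset_oddSets subset_rfl,
    cmPPos_iff_nimSum_eq_zero subset_rfl nimSets_subset_oddSets]
end

section
/- Adding moves to an impartial game that only lead from the old game's P-positions to the old game's N-positions does not change the set of P-positions: let X be a set of positions, let M ⊆ X × X be a move relation whose converse is well-founded (every play terminates), and define P-positions of M by the recursion 'p is a P-position iff every move from p leads to a non-P-position'. Let M' ⊇ M be another such move relation (with well-founded converse) such that every pair (p, q) ∈ M' \ M has p a P-position of M and q an N-position of M. Then the P-positions of M' are exactly the P-positions of M. -/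
/-! Since the converse of `M'` is well-founded, the P-positions of `M'` are the unique predicate
`S` with `S p ↔ ∀ q, M' p q → ¬ S q`. The P-positions of `M` satisfy this equation: an old move
from a P-position of `M` leads to an N-position of `M` by definition, a new one by assumption,
and every old move is a move of `M'`. -/

/-- P-positions of an impartial game given by a move relation `M` on positions
`X` whose converse is well-founded (every play terminates), defined by
well-founded recursion: `p` is a P-position iff every move from `p` leads to a
position that is not a P-position. -/
def GamePPos {X : Type*} (M : X → X → Prop) (h : WellFounded (fun q p => M p q))
    (p : X) : Prop :=
  WellFounded.fix (C := fun _ => Prop) h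
    (fun p ih => ∀ q, ∀ hq : M p q, ¬ ih q hq) p

section
variable {X : Type*} (M : X → X → Prop) (hM : WellFounded (fun q p => M p q))

theorem gamePPos_iff (p : X) : GamePPos M hM p ↔ ∀ q, M p q → ¬ GamePPos M hM q := by
  rw [GamePPos, WellFounded.fix_eq]
  rfl

theorem gamePPos_unique {S : X → Prop} (hS : ∀ p, S p ↔ ∀ q, M p q → ¬ S q) (p : X) :
    GamePPos M hM p ↔ S p := by
  induction p using hM.induction with
  | _ p ih =>
    rw [gamePPos_iff, hS]
    exact forall_congr' fun q => forall_congr' fun hq => not_congr (ih q hq)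

end

/-- Adding moves to an impartial game that only lead from the old game's
P-positions to the old game's N-positions does not change the set of
P-positions. -/
theorem ppos_eq_of_added_moves {X : Type*} (M M' : X → X → Prop)
    (hM : WellFounded (fun q p => M p q)) (hM' : WellFounded (fun q p => M' p q))
    (hsub : ∀ p q, M p q → M' p q)
    (hnew : ∀ p q, M' p q → ¬ M p q →
      GamePPos M hM p ∧ ¬ GamePPos M hM q) :
    ∀ p, GamePPos M' hM' p ↔ GamePPos M hM p := by
  refine gamePPos_unique M' hM' fun p => ⟨fun hp q hq => ?_, fun hp => ?_⟩
  · by_cases hold : M p q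
    · exact (gamePPos_iff M hM p).1 hp q hold
    · exact (hnew p q hq hold).2
  · exact (gamePPos_iff M hM p).2 fun q hq => hp q (hsub p q hq)
end

section
/- In any CM-Nim game on k jars in which the complement (within {1, ..., k}) of every permissible set is also a permissible set, the position (n, n, ..., n) with all jars containing the same number n of cookies is a P-position, for every natural number n. -/
theorem CMPPos.of_forall_move_exists_move {k : ℕ} {𝒮 : Set (Finset (Fin k))}
    {P : (Fin k → ℕ) → Prop} (hP : ∀ p, P p → ∀ q, CMMove 𝒮 p q → ∃ r, CMMove 𝒮 q r ∧ P r) :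
    ∀ p, P p → CMPPos 𝒮 p := by
  intro p
  induction hs : ∑ i, p i using Nat.strong_induction_on generalizing p with
  | _ s ih =>
    intro hp
    rw [CMPPos]
    intro q hpq hq
    obtain ⟨r, hqr, hr⟩ := hP p hp q hpq
    rw [CMPPos] at hq
    exact hq r hqr (ih _ (hs ▸ (hqr.sum_lt.trans hpq.sum_lt)) r rfl hr)

theorem CMMove.exists_move_const_of_compl_mem {k : ℕ} {𝒮 : Set (Finset (Fin k))}
    (hne : ∀ S ∈ 𝒮, S.Nonempty) (hcompl : ∀ S ∈ 𝒮, Sᶜ ∈ 𝒮) {n : ℕ} {q : Fin k → ℕ}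
    (h : CMMove 𝒮 (fun _ => n) q) : ∃ m, CMMove 𝒮 q (fun _ => m) := by
  obtain ⟨S, hS, ⟨i₀, hi₀⟩, c, hc, hmoved, hkept⟩ := h
  refine ⟨n - c, Sᶜ, hcompl S hS, hne _ (hcompl S hS), c, hc, fun i hi => ?_, fun i hi => ?_⟩
  · rw [hkept i (Finset.mem_compl.mp hi)]
    exact ⟨(hmoved i₀ hi₀).1, rfl⟩
  · exact ((hmoved i (by simpa using hi)).2).symm

theorem const_ppos_of_compl_closed_general (k : ℕ) (𝒮 : Set (Finset (Fin k)))
    (hne : ∀ S ∈ 𝒮, S.Nonempty)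
    (hcompl : ∀ S ∈ 𝒮, Sᶜ ∈ 𝒮) (n : ℕ) :
    CMPPos 𝒮 (fun _ => n) := by
  refine CMPPos.of_forall_move_exists_move (P := fun p => ∃ m, p = fun _ => m) ?_ _ ⟨n, rfl⟩
  rintro _ ⟨m, rfl⟩ q hq
  obtain ⟨m', hm'⟩ := hq.exists_move_const_of_compl_mem hne hcompl
  exact ⟨_, hm', m', rfl⟩

/-- In any CM-Nim game on `k` jars (a family `𝒮` of nonempty permissible sets
containing every singleton) in which the complement of every permissible set is
also permissible, the position with all jars containing the same number `n` of
cookies is a P-position, for every `n`. -/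
theorem const_ppos_of_compl_closed (k : ℕ) (𝒮 : Set (Finset (Fin k)))
    (hne : ∀ S ∈ 𝒮, S.Nonempty)
    (hsingle : ∀ i : Fin k, ({i} : Finset (Fin k)) ∈ 𝒮)
    (hcompl : ∀ S ∈ 𝒮, Sᶜ ∈ 𝒮) (n : ℕ) :
    CMPPos 𝒮 (fun _ => n) :=
  const_ppos_of_compl_closed_general k 𝒮 hne hcompl n
end

section
/- In any CM-Nim game with k jars, no coordinate of a P-position is larger than twice the sum of the other coordinates: if (a_1, ..., a_k) is a P-position, then for every index j we have a_j ≤ 2 · (a_1 + ... + a_k − a_j). -/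
open Finset

variable {k : ℕ} {𝒮 : Set (Finset (Fin k))} {p q : Fin k → ℕ}

lemma CMPPos.not_of_cmMove (hp : CMPPos 𝒮 p) (h : CMMove 𝒮 p q) : ¬ CMPPos 𝒮 q := by
  rw [CMPPos] at hp
  exact hp q h

lemma exists_cmMove_cmPPos_of_not_cmPPos (hp : ¬ CMPPos 𝒮 p) :
    ∃ q, CMMove 𝒮 p q ∧ CMPPos 𝒮 q := by
  rw [CMPPos] at hp
  push Not at hp
  exact hp

lemma CMMove.of_forall_ne_eq {j : Fin k} (hj : ({j} : Finset (Fin k)) ∈ 𝒮)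
    (hne : ∀ i ≠ j, q i = p i) (hlt : q j < p j) : CMMove 𝒮 p q := by
  refine ⟨{j}, hj, singleton_nonempty j, p j - q j, by omega, ?_, ?_⟩
  · intro i hi
    rw [mem_singleton.mp hi]
    omega
  · intro i hi
    exact hne i (notMem_singleton.mp hi)

/-- Unless a move touches jar `j` alone, the other jars lose at least as much as jar `j`
(rearranged to avoid truncated subtraction). -/
lemma CMMove.forall_ne_eq_or_add_sum_erase_le (h : CMMove 𝒮 p q) (j : Fin k) :
    ((∀ i ≠ j, q i = p i) ∧ q j < p j) ∨
      p j + ∑ i ∈ univ.erase j, q i ≤ q j + ∑ i ∈ univ.erase j, p i := by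
  obtain ⟨S, -, hSne, c, hc, hmem, hout⟩ := h
  have hle : ∀ i, q i ≤ p i := fun i => by
    by_cases hi : i ∈ S
    · have := hmem i hi; omega
    · exact (hout i hi).le
  have hj : p j ≤ q j + c := by
    by_cases hjS : j ∈ S
    · have := hmem j hjS; omega
    · have := hout j hjS; omega
  by_cases hS : ∃ i ∈ S, i ≠ j
  · obtain ⟨i₀, hi₀S, hi₀j⟩ := hS
    have hi₀ : i₀ ∈ univ.erase j := mem_erase.mpr ⟨hi₀j, mem_univ _⟩
    have hrest : ∑ i ∈ (univ.erase j).erase i₀, q i ≤ ∑ i ∈ (univ.erase j).erase i₀, p i :=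
      sum_le_sum fun i _ => hle i
    have := hmem i₀ hi₀S
    right
    rw [← add_sum_erase _ _ hi₀, ← add_sum_erase _ _ hi₀]
    omega
  · push Not at hS
    have hoff : ∀ i ≠ j, q i = p i := fun i hij => hout i fun hi => hij (hS i hi)
    obtain ⟨i₀, hi₀⟩ := hSne
    obtain rfl := hS i₀ hi₀
    have := hmem i₀ hi₀
    exact Or.inl ⟨hoff, by omega⟩

/-- From a position with `a j > 2 T`, where `T` is the sum of the other jars, move to the position
`b` with `b j = 2 T`. Some reply `b → q` leads to a P-position `q`; it cannot touch jar `j` alone,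
since then `q` would be reachable from `a`, so jar `j` loses at most what the others lose, and
`q j ≤ 2 ∑_{i ≠ j} q i` (by induction) contradicts the decrease of the total. -/
theorem CMPPos.le_two_mul_sum_erase {j : Fin k} (hj : ({j} : Finset (Fin k)) ∈ 𝒮)
    {a : Fin k → ℕ} (ha : CMPPos 𝒮 a) : a j ≤ 2 * ∑ i ∈ univ.erase j, a i := by
  induction hn : ∑ i, a i using Nat.strong_induction_on generalizing a with
  | _ n ih =>
  by_contra! hlt
  set T := ∑ i ∈ univ.erase j, a i
  set b := Function.update a j (2 * T)
  have hbne : ∀ i ≠ j, b i = a i := fun i hi => Function.update_of_ne hi _ _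
  have hbj : b j = 2 * T := Function.update_self j _ a
  have hbT : ∑ i ∈ univ.erase j, b i = T := sum_congr rfl fun i hi => hbne i (ne_of_mem_erase hi)
  obtain ⟨q, hbq, hq⟩ := exists_cmMove_cmPPos_of_not_cmPPos
    (ha.not_of_cmMove (CMMove.of_forall_ne_eq hj hbne (by omega)))
  have hqb := hbq.sum_lt
  have hsa := add_sum_erase univ a (mem_univ j)
  have hsb := add_sum_erase univ b (mem_univ j)
  have hsq := add_sum_erase univ q (mem_univ j)
  rcases hbq.forall_ne_eq_or_add_sum_erase_le j with ⟨hoff, hqj⟩ | hdrop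
  · refine ha.not_of_cmMove (CMMove.of_forall_ne_eq hj (fun i hi => ?_) (by omega)) hq
    rw [hoff i hi, hbne i hi]
  · have := ih (∑ i, q i) (by omega) hq rfl
    omega

theorem ppos_coord_le_twice_sum_others_general (k : ℕ) (𝒮 : Set (Finset (Fin k)))
    (hsingle : ∀ i : Fin k, ({i} : Finset (Fin k)) ∈ 𝒮)
    (a : Fin k → ℕ) (h : CMPPos 𝒮 a) (j : Fin k) :
    a j ≤ 2 * ∑ i ∈ Finset.univ.erase j, a i :=
  h.le_two_mul_sum_erase (hsingle j)

/-- In any CM-Nim game with `k` jars (a family `𝒮` of nonempty permissible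
sets containing every singleton), no coordinate of a P-position is larger than
twice the sum of the other coordinates. -/
theorem ppos_coord_le_twice_sum_others (k : ℕ) (𝒮 : Set (Finset (Fin k)))
    (hne : ∀ S ∈ 𝒮, S.Nonempty)
    (hsingle : ∀ i : Fin k, ({i} : Finset (Fin k)) ∈ 𝒮)
    (a : Fin k → ℕ) (h : CMPPos 𝒮 a) (j : Fin k) :
    a j ≤ 2 * ∑ i ∈ Finset.univ.erase j, a i :=
  ppos_coord_le_twice_sum_others_general k 𝒮 hsingle a h j
end
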